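/- Let c > 0, d \geq 0, and h > 0. Then \int_0^h artanh(e^{-c(d + h - w)}) \, w \, dw = \sum_{n=0}^{\infty} \left[ \frac{h \, e^{-c(2n+1)d}}{c(2n+1)^2} - \frac{e^{-c(2n+1)d} - e^{-c(2n+1)(d+h)}}{c^2 (2n+1)^3} \right], and the series on the right converges absolutely. -/

import Mathlib

open intervalIntegral

/-- The real inverse hyperbolic tangent: `artanh z = (1/2) log((1+z)/(1-z))`. -/
noncomputable def artanh (z : ℝ) : ℝ := (1 / 2) * Real.log ((1 + z) / (1 - z))

lemma hasSum_artanh {z : ℝ} (h0 : 0 < z) (h1 : z < 1) :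
    HasSum (fun k : ℕ => z ^ (2 * k + 1) / (2 * k + 1)) (artanh z) := by
  have habs : |z| < 1 := by rw [abs_of_pos h0]; exact h1
  have hs := (Real.hasSum_log_sub_log_of_abs_lt_one habs).mul_left (1 / 2)
  have h2 : artanh z = (1 / 2) * (Real.log (1 + z) - Real.log (1 - z)) := by
    rw [artanh, Real.log_div (by linarith) (by linarith)]
  rw [h2]
  convert hs using 2 with k
  · rfl
  ring

lemma term_deriv (A d h : ℝ) (hA : A ≠ 0) (w : ℝ) :
    HasDerivAt (fun w => Real.exp (-(A * (d + h - w))) * (w / A - 1 / A ^ 2))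
      (Real.exp (-(A * (d + h - w))) * w) w := by
  have h1 : HasDerivAt (fun w : ℝ => -(A * (d + h - w))) A w := by
    simpa using (((hasDerivAt_id w).const_sub (d + h)).const_mul A).fun_neg
  have h2 := h1.exp
  have h3 : HasDerivAt (fun w : ℝ => w / A - 1 / A ^ 2) (1 / A) w := by
    exact ((hasDerivAt_id w).div_const A).sub_const (1 / A ^ 2)
  have h4 := h2.mul h3
  convert h4 using 1
  · rfl
  · rfl
  · rfl
  field_simp
  ring

lemma term_integral (A d h : ℝ) (hA : 0 < A) :
    ∫ w in (0:ℝ)..h, Real.exp (-(A * (d + h - w))) * w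
      = h * Real.exp (-(A * d)) / A
        - (Real.exp (-(A * d)) - Real.exp (-(A * (d + h)))) / A ^ 2 := by
  rw [intervalIntegral.integral_eq_sub_of_hasDerivAt
      (fun w _ => term_deriv A d h hA.ne' w)
      (Continuous.intervalIntegrable (by continuity) _ _)]
  rw [show d + h - h = d by ring, show d + h - (0:ℝ) = d + h by ring]
  field_simp
  ring

/-- For `c > 0`, `d ≥ 0`, `h > 0`,
`∫_0^h artanh(e^{-c(d+h-w)}) w dw
  = ∑_{n=0}^∞ [ h e^{-c(2n+1)d}/(c(2n+1)²)
      - (e^{-c(2n+1)d} - e^{-c(2n+1)(d+h)})/(c²(2n+1)³) ]`,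
and the series on the right converges absolutely. -/
theorem integral_artanh_hat_basis (c d h : ℝ) (hc : 0 < c) (hd : 0 ≤ d) (hh : 0 < h) :
    Summable (fun n : ℕ =>
      |h * Real.exp (-(c * (2 * n + 1) * d)) / (c * (2 * n + 1) ^ 2) -
        (Real.exp (-(c * (2 * n + 1) * d)) - Real.exp (-(c * (2 * n + 1) * (d + h)))) /
          (c ^ 2 * (2 * n + 1) ^ 3)|) ∧
    (∫ w in (0 : ℝ)..h, artanh (Real.exp (-(c * (d + h - w)))) * w) =
      ∑' n : ℕ,
        (h * Real.exp (-(c * (2 * n + 1) * d)) / (c * (2 * n + 1) ^ 2) -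
          (Real.exp (-(c * (2 * n + 1) * d)) - Real.exp (-(c * (2 * n + 1) * (d + h)))) /
            (c ^ 2 * (2 * n + 1) ^ 3)) := by
  -- abbreviations
  set T : ℕ → ℝ := fun n =>
    h * Real.exp (-(c * (2 * n + 1) * d)) / (c * (2 * n + 1) ^ 2) -
      (Real.exp (-(c * (2 * n + 1) * d)) - Real.exp (-(c * (2 * n + 1) * (d + h)))) /
        (c ^ 2 * (2 * n + 1) ^ 3) with hTdef
  set f : ℕ → ℝ → ℝ := fun n w =>
    Real.exp (-(c * (2 * n + 1) * (d + h - w))) / (2 * n + 1) * w with hfdef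
  have hm : ∀ n : ℕ, (0:ℝ) < 2 * n + 1 := fun n => by positivity
  have hA : ∀ n : ℕ, (0:ℝ) < c * (2 * n + 1) := fun n => mul_pos hc (hm n)
  -- value of each term integral
  have hTval : ∀ n : ℕ, ∫ w in (0:ℝ)..h, f n w = T n := by
    intro n
    have : ∀ w : ℝ, f n w = (1 / (2 * n + 1)) *
        (Real.exp (-(c * (2 * n + 1) * (d + h - w))) * w) := by
      intro w; simp only [hfdef]; ring
    rw [funext this, intervalIntegral.integral_const_mul,
      term_integral (c * (2 * n + 1)) d h (hA n)]
    have h1 : c * (2 * n + 1) ≠ 0 := (hA n).ne'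
    simp only [hTdef]
    field_simp
  -- bound on T n
  have hT_nonneg : ∀ n, 0 ≤ T n := by
    intro n
    rw [← hTval n]
    apply intervalIntegral.integral_nonneg hh.le
    intro w hw
    have := (hm n)
    have : (0:ℝ) ≤ Real.exp (-(c * (2 * n + 1) * (d + h - w))) / (2 * n + 1) :=
      div_nonneg (Real.exp_pos _).le (hm n).le
    exact mul_nonneg this hw.1
  have hT_le : ∀ n : ℕ, T n ≤ h / (c * (2 * n + 1) ^ 2) := by
    intro n
    have e1 : Real.exp (-(c * (2 * n + 1) * (d + h))) ≤ Real.exp (-(c * (2 * n + 1) * d)) := by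
      apply Real.exp_le_exp.mpr
      have := (hA n).le
      nlinarith
    have e2 : Real.exp (-(c * (2 * n + 1) * d)) ≤ 1 := by
      apply Real.exp_le_one_iff.mpr
      have := (hA n).le
      nlinarith
    have hpos2 : (0:ℝ) < c * (2 * n + 1) ^ 2 := by positivity
    have hpos3 : (0:ℝ) < c ^ 2 * (2 * n + 1) ^ 3 := by positivity
    have : T n ≤ h * Real.exp (-(c * (2 * n + 1) * d)) / (c * (2 * n + 1) ^ 2) := by
      simp only [hTdef]
      have : 0 ≤ (Real.exp (-(c * (2 * n + 1) * d)) -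
          Real.exp (-(c * (2 * n + 1) * (d + h)))) / (c ^ 2 * (2 * n + 1) ^ 3) :=
        div_nonneg (by linarith) hpos3.le
      linarith
    calc T n ≤ h * Real.exp (-(c * (2 * n + 1) * d)) / (c * (2 * n + 1) ^ 2) := this
      _ ≤ h / (c * (2 * n + 1) ^ 2) := by
          gcongr
          nlinarith [Real.exp_pos (-(c * (2 * n + 1) * d))]
  -- summability of the bound
  have hbound_summable : Summable (fun n : ℕ => h / (c * (2 * n + 1) ^ 2)) := by
    have h1 : Summable (fun n : ℕ => (1:ℝ) / (n + 1) ^ 2) := by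
      have h0 : Summable (fun n : ℕ => (1:ℝ) / (n : ℝ) ^ 2) :=
        Real.summable_one_div_nat_pow.mpr (by norm_num)
      have := (summable_nat_add_iff 1).mpr h0
      simpa using this
    have h2 : Summable (fun n : ℕ => (1:ℝ) / (2 * n + 1) ^ 2) := by
      apply Summable.of_nonneg_of_le (fun n => by positivity) (fun n => ?_) h1
      apply div_le_div_of_nonneg_left one_pos.le (by positivity)
      have : ((n:ℝ) + 1) ≤ 2 * n + 1 := by nlinarith [Nat.cast_nonneg (α := ℝ) n]
      nlinarith [Nat.cast_nonneg (α := ℝ) n]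
    have := h2.mul_left (h / c)
    apply this.congr
    intro n
    field_simp
  have hTabs_summable : Summable (fun n => |T n|) := by
    apply Summable.of_nonneg_of_le (fun n => abs_nonneg _) (fun n => ?_) hbound_summable
    rw [abs_of_nonneg (hT_nonneg n)]
    exact hT_le n
  refine ⟨hTabs_summable, ?_⟩
  have hT_summable : Summable T := hTabs_summable.of_abs
  -- integrability on Ioc
  have hf_cont : ∀ n : ℕ, Continuous (f n) := by
    intro n
    apply Continuous.mul _ continuous_id
    apply Continuous.div_const
    exact Real.continuous_exp.comp (by continuity)
  have hf_int : ∀ n : ℕ, MeasureTheory.Integrable (f n)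
      (MeasureTheory.volume.restrict (Set.Ioc 0 h)) :=
    fun n => (hf_cont n).integrableOn_Ioc
  -- norm integrals
  have hf_nonneg : ∀ n : ℕ, ∀ w ∈ Set.Ioc (0:ℝ) h, 0 ≤ f n w := by
    intro n w hw
    exact mul_nonneg (div_nonneg (Real.exp_pos _).le (hm n).le) hw.1.le
  have hnorm : ∀ n : ℕ, (∫ w in Set.Ioc (0:ℝ) h, ‖f n w‖) = T n := by
    intro n
    rw [MeasureTheory.setIntegral_congr_fun measurableSet_Ioc
      (fun w hw => by rw [Real.norm_eq_abs, abs_of_nonneg (hf_nonneg n w hw)]),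
      ← intervalIntegral.integral_of_le hh.le, hTval n]
  have hsumnorm : Summable (fun n : ℕ => ∫ w in Set.Ioc (0:ℝ) h, ‖f n w‖) := by
    rw [funext hnorm]; exact hT_summable
  have hswap := MeasureTheory.integral_tsum_of_summable_integral_norm hf_int hsumnorm
  -- pointwise identification of the sum with the integrand
  have hpt : ∀ w ∈ Set.Ioo (0:ℝ) h,
      (∑' n : ℕ, f n w) = artanh (Real.exp (-(c * (d + h - w)))) * w := by
    intro w hw
    set z : ℝ := Real.exp (-(c * (d + h - w))) with hz
    have hz0 : 0 < z := Real.exp_pos _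
    have hz1 : z < 1 := by
      apply Real.exp_lt_one_iff.mpr
      have : 0 < d + h - w := by cases hw with | intro h1 h2 => linarith
      nlinarith
    have hs := (hasSum_artanh hz0 hz1).mul_right w
    have heq : ∀ k : ℕ, z ^ (2 * k + 1) / (2 * k + 1) * w = f k w := by
      intro k
      have : z ^ (2 * k + 1) = Real.exp (-(c * (2 * k + 1) * (d + h - w))) := by
        rw [hz, ← Real.exp_nat_mul]
        congr 1
        push_cast
        ring
      rw [this, hfdef]
    rw [funext heq] at hs
    exact hs.tsum_eq
  -- put everything together
  calc (∫ w in (0:ℝ)..h, artanh (Real.exp (-(c * (d + h - w)))) * w)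
      = ∫ w in Set.Ioc (0:ℝ) h, artanh (Real.exp (-(c * (d + h - w)))) * w :=
        intervalIntegral.integral_of_le hh.le
    _ = ∫ w in Set.Ioo (0:ℝ) h, artanh (Real.exp (-(c * (d + h - w)))) * w :=
        MeasureTheory.integral_Ioc_eq_integral_Ioo
    _ = ∫ w in Set.Ioo (0:ℝ) h, (∑' n : ℕ, f n w) :=
        (MeasureTheory.setIntegral_congr_fun measurableSet_Ioo hpt).symm
    _ = ∫ w in Set.Ioc (0:ℝ) h, (∑' n : ℕ, f n w) :=
        MeasureTheory.integral_Ioc_eq_integral_Ioo.symm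
    _ = ∑' n : ℕ, ∫ w in Set.Ioc (0:ℝ) h, f n w := hswap.symm
    _ = ∑' n : ℕ, T n := by
        congr 1
        funext n
        rw [← intervalIntegral.integral_of_le hh.le, hTval n]
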